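/- Fano's inequality: for discrete random variables Y taking values in a finite set 𝒴 with |𝒴| ≥ 2, an observation Z, and an estimator Ŷ = g(Z) that is a (measurable) function of Z, letting E = 1{Ŷ ≠ Y} denote the error indicator, we have P(E = 1) ≥ (H(Y | Z) − H(E)) / log(|𝒴| − 1). -/

import Mathlib

open scoped Classical
open Finset

/-- Probability of an event under weight function `p` on a finite sample space. -/
noncomputable def prob {Ω : Type*} [Fintype Ω] (p : Ω → ℝ) (s : Ω → Prop) : ℝ :=
  ∑ ω ∈ Finset.univ.filter (fun ω => s ω), p ω

/-- Shannon entropy of a discrete random variable `X`. -/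
noncomputable def entropy {Ω α : Type*} [Fintype Ω] [Fintype α] (p : Ω → ℝ) (X : Ω → α) : ℝ :=
  -∑ a : α, prob p (fun ω => X ω = a) * Real.log (prob p (fun ω => X ω = a))

/-- Shannon conditional entropy `H(Y | X)`. -/
noncomputable def condEntropy {Ω α β : Type*} [Fintype Ω] [Fintype α] [Fintype β]
    (p : Ω → ℝ) (Y : Ω → β) (X : Ω → α) : ℝ :=
  -∑ a : α, ∑ b : β, prob p (fun ω => X ω = a ∧ Y ω = b) *
    Real.log (prob p (fun ω => X ω = a ∧ Y ω = b) / prob p (fun ω => X ω = a))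

/-- `p` is a probability mass function on the finite sample space `Ω`. -/
def IsPMF {Ω : Type*} [Fintype Ω] (p : Ω → ℝ) : Prop :=
  (∀ ω, 0 ≤ p ω) ∧ ∑ ω : Ω, p ω = 1

/-!
Let `ε = P(g Z ≠ Y)` and compare the conditional law of `Y` given `Z = z` with the law
`fanoKernel g ε z`, which puts mass `1 - ε` on the guess `g z` and spreads `ε` evenly over the
other `|𝒴| - 1` values. By Gibbs' inequality `H(Y | Z)` is at most the cross entropy against this
law; as the kernel only sees whether the guess is right, that cross entropy is
`-(1 - ε) log (1 - ε) - ε log (ε / (|𝒴| - 1)) = H(E) + ε log (|𝒴| - 1)`.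
When `|𝒴| ≤ 1` the logarithm is `log 0` or `log (-1)`, both `0` in Lean, and the bound reads `0 ≤ ε`.
-/

open Real

section Prob

variable {Ω : Type*} [Fintype Ω] {p : Ω → ℝ}

lemma prob_eq_sum_ite (p : Ω → ℝ) (s : Ω → Prop) :
    prob p s = ∑ ω, if s ω then p ω else 0 := by
  rw [prob, Finset.sum_filter]

lemma prob_nonneg (hp : ∀ ω, 0 ≤ p ω) (s : Ω → Prop) : 0 ≤ prob p s :=
  Finset.sum_nonneg fun ω _ => hp ω

lemma prob_mono (hp : ∀ ω, 0 ≤ p ω) {s t : Ω → Prop} (h : ∀ ω, s ω → t ω) :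
    prob p s ≤ prob p t :=
  Finset.sum_le_sum_of_subset_of_nonneg (Finset.monotone_filter_right _ fun ω _ => h ω)
    fun ω _ _ => hp ω

lemma prob_not (hp : IsPMF p) (s : Ω → Prop) : prob p (fun ω => ¬ s ω) = 1 - prob p s := by
  rw [eq_sub_iff_add_eq, ← hp.2, prob, prob, add_comm, Finset.sum_filter_add_sum_filter_not]

lemma sum_prob_and (s : Ω → Prop) {α : Type*} [Fintype α] (X : Ω → α) :
    ∑ a, prob p (fun ω => s ω ∧ X ω = a) = prob p s := by
  simp only [prob_eq_sum_ite]
  rw [Finset.sum_comm]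
  refine Finset.sum_congr rfl fun ω _ => ?_
  by_cases h : s ω <;> simp [h]

lemma sum_sum_prob_mul {α β : Type*} [Fintype α] [Fintype β] (X : Ω → α) (Y : Ω → β)
    (f : α → β → ℝ) :
    ∑ a, ∑ b, prob p (fun ω => X ω = a ∧ Y ω = b) * f a b = ∑ ω, p ω * f (X ω) (Y ω) := by
  have h ω : p ω * f (X ω) (Y ω) =
      ∑ a, ∑ b, (if X ω = a ∧ Y ω = b then p ω else 0) * f a b := by
    rw [Finset.sum_eq_single (X ω) (fun a _ ha => Finset.sum_eq_zero fun b _ => by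
        simp [Ne.symm ha]) (by simp), Finset.sum_eq_single (Y ω) (fun b _ hb => by
        simp [Ne.symm hb]) (by simp)]
    simp
  simp only [Finset.sum_congr rfl fun ω _ => h ω, prob_eq_sum_ite, Finset.sum_mul]
  symm
  rw [Finset.sum_comm]
  -- `congr!` identifies the classical `Decidable` instances coming from `prob` with those of `h`
  exact Finset.sum_congr rfl fun a _ => by rw [Finset.sum_comm]; congr!

lemma sum_mul_ite (s : Ω → Prop) (u v : ℝ) :
    ∑ ω, p ω * (if s ω then u else v) = prob p s * u + prob p (fun ω => ¬ s ω) * v := by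
  simp only [prob_eq_sum_ite, Finset.sum_mul, ← Finset.sum_add_distrib]
  refine Finset.sum_congr rfl fun ω _ => ?_
  split_ifs <;> simp

lemma entropy_decide (hp : IsPMF p) (s : Ω → Prop) [DecidablePred s] :
    entropy p (fun ω => decide (s ω)) = binEntropy (prob p s) := by
  simp only [entropy, Fintype.sum_bool, decide_eq_true_eq, decide_eq_false_iff_not,
    prob_not hp, binEntropy, log_inv]
  ring

end Prob

lemma mul_log_sub_mul_log_div_le {a c q : ℝ} (ha : 0 ≤ a) (hac : a ≤ c) (hq : 0 ≤ q)
    (hsupp : 0 < a → 0 < q) :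
    a * log q - a * log (a / c) ≤ q * c - a := by
  rcases ha.eq_or_lt with rfl | ha
  · simpa using mul_nonneg hq hac
  have hc : 0 < c := ha.trans_le hac
  have hq : 0 < q := hsupp ha
  calc a * log q - a * log (a / c) = a * log (q * c / a) := by
        rw [log_div (by positivity) ha.ne', log_mul hq.ne' hc.ne', log_div ha.ne' hc.ne']
        ring
    _ ≤ a * (q * c / a - 1) :=
        mul_le_mul_of_nonneg_left (log_le_sub_one_of_pos (by positivity)) ha.le
    _ = q * c - a := by field_simp

theorem condEntropy_le_sum_sum_mul_log {Ω α β : Type*} [Fintype Ω] [Fintype α] [Fintype β]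
    {p : Ω → ℝ} (hp : ∀ ω, 0 ≤ p ω) (Y : Ω → β) (X : Ω → α) (q : α → β → ℝ)
    (hq : ∀ a b, 0 ≤ q a b) (hq_sum : ∀ a, ∑ b, q a b ≤ 1)
    (hsupp : ∀ a b, 0 < prob p (fun ω => X ω = a ∧ Y ω = b) → 0 < q a b) :
    condEntropy p Y X ≤ -∑ a, ∑ b, prob p (fun ω => X ω = a ∧ Y ω = b) * log (q a b) := by
  rw [condEntropy, neg_le_neg_iff, ← sub_nonpos, ← Finset.sum_sub_distrib]
  refine Finset.sum_nonpos fun a _ => ?_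
  rw [← Finset.sum_sub_distrib]
  calc _ ≤ ∑ b, (q a b * prob p (fun ω => X ω = a) - prob p (fun ω => X ω = a ∧ Y ω = b)) :=
        Finset.sum_le_sum fun b _ => mul_log_sub_mul_log_div_le (prob_nonneg hp _)
          (prob_mono hp fun ω h => h.1) (hq a b) (hsupp a b)
    _ = (∑ b, q a b) * prob p (fun ω => X ω = a) - prob p (fun ω => X ω = a) := by
        rw [Finset.sum_sub_distrib, Finset.sum_mul, sum_prob_and]
    _ ≤ 0 := sub_nonpos.2 (mul_le_of_le_one_left (prob_nonneg hp _) (hq_sum a))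

section Fano

variable {γ 𝒴 : Type*} [Fintype 𝒴]

noncomputable def fanoKernel (g : γ → 𝒴) (ε : ℝ) (z : γ) (y : 𝒴) : ℝ :=
  if g z = y then 1 - ε else ε / (Fintype.card 𝒴 - 1)

lemma one_le_card_sub_one [Nontrivial 𝒴] : 1 ≤ (Fintype.card 𝒴 : ℝ) - 1 := by
  have : (2 : ℝ) ≤ Fintype.card 𝒴 := by exact_mod_cast Fintype.one_lt_card
  linarith

lemma card_sub_one_pos [Nontrivial 𝒴] : 0 < (Fintype.card 𝒴 : ℝ) - 1 :=
  zero_lt_one.trans_le one_le_card_sub_one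

lemma fanoKernel_nonneg [Nontrivial 𝒴] (g : γ → 𝒴) {ε : ℝ} (h0 : 0 ≤ ε) (h1 : ε ≤ 1)
    (z : γ) (y : 𝒴) : 0 ≤ fanoKernel g ε z y := by
  unfold fanoKernel
  split_ifs
  exacts [sub_nonneg.2 h1, div_nonneg h0 card_sub_one_pos.le]

lemma sum_fanoKernel [Nontrivial 𝒴] (g : γ → 𝒴) (ε : ℝ) (z : γ) :
    ∑ y, fanoKernel g ε z y = 1 := by
  set c := ε / ((Fintype.card 𝒴 : ℝ) - 1)
  have h y : fanoKernel g ε z y = c + if g z = y then 1 - ε - c else 0 := by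
    unfold fanoKernel
    split_ifs <;> ring
  simp only [h, Finset.sum_add_distrib, Finset.sum_const, Finset.card_univ, nsmul_eq_mul,
    Finset.sum_ite_eq, Finset.mem_univ, if_true]
  have : ((Fintype.card 𝒴 : ℝ) - 1) * c = ε := mul_div_cancel₀ ε card_sub_one_pos.ne'
  linarith

theorem condEntropy_le_binEntropy_add_mul_log {Ω : Type*} [Fintype Ω] [Fintype γ]
    [Nontrivial 𝒴] {p : Ω → ℝ} (hp : IsPMF p) (Y : Ω → 𝒴) (Z : Ω → γ) (g : γ → 𝒴) :
    condEntropy p Y Z ≤ binEntropy (prob p (fun ω => g (Z ω) ≠ Y ω)) +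
      prob p (fun ω => g (Z ω) ≠ Y ω) * log ((Fintype.card 𝒴 : ℝ) - 1) := by
  set ε := prob p (fun ω => g (Z ω) ≠ Y ω)
  have hε0 : 0 ≤ ε := prob_nonneg hp.1 _
  have hcorrect : prob p (fun ω => g (Z ω) = Y ω) = 1 - ε := by
    rw [← prob_not hp]
    simp only [ne_eq, not_not]
  have hε1 : ε ≤ 1 := by linarith [prob_nonneg hp.1 fun ω => g (Z ω) = Y ω]
  have hsupp z y (hzy : 0 < prob p (fun ω => Z ω = z ∧ Y ω = y)) : 0 < fanoKernel g ε z y := by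
    unfold fanoKernel
    split_ifs with h
    · have := prob_mono hp.1 (s := fun ω => Z ω = z ∧ Y ω = y) (t := fun ω => g (Z ω) = Y ω)
        (by rintro ω ⟨rfl, rfl⟩; exact h)
      linarith
    · have := prob_mono hp.1 (s := fun ω => Z ω = z ∧ Y ω = y) (t := fun ω => g (Z ω) ≠ Y ω)
        (by rintro ω ⟨rfl, rfl⟩; exact h)
      exact div_pos (hzy.trans_le this) card_sub_one_pos
  calc condEntropy p Y Z
      ≤ -∑ z, ∑ y, prob p (fun ω => Z ω = z ∧ Y ω = y) * log (fanoKernel g ε z y) :=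
        condEntropy_le_sum_sum_mul_log hp.1 Y Z _
          (fanoKernel_nonneg g hε0 hε1)
          (fun z => (sum_fanoKernel g ε z).le) hsupp
    _ = -((1 - ε) * log (1 - ε) + ε * log (ε / ((Fintype.card 𝒴 : ℝ) - 1))) := by
        rw [sum_sum_prob_mul]
        simp only [fanoKernel, apply_ite log]
        rw [sum_mul_ite, hcorrect]
    _ = binEntropy ε + ε * log ((Fintype.card 𝒴 : ℝ) - 1) := by
        rcases hε0.eq_or_lt with h | h
        · simp [← h]
        · rw [binEntropy, log_div h.ne' card_sub_one_pos.ne', log_inv, log_inv]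
          ring

end Fano

theorem fano_inequality_general {Ω γ 𝒴 : Type*} [Fintype Ω] [Fintype γ] [Fintype 𝒴]
    (p : Ω → ℝ) (hp : IsPMF p) (Y : Ω → 𝒴) (Z : Ω → γ) (g : γ → 𝒴) :
    prob p (fun ω => g (Z ω) ≠ Y ω)
      ≥ (condEntropy p Y Z - entropy p (fun ω => decide (g (Z ω) ≠ Y ω)))
          / Real.log ((Fintype.card 𝒴 : ℝ) - 1) := by
  rcases subsingleton_or_nontrivial 𝒴 with h𝒴 | h𝒴
  · have hcard : Fintype.card 𝒴 ≤ 1 := Fintype.card_le_one_iff_subsingleton.2 h𝒴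
    have hlog : log ((Fintype.card 𝒴 : ℝ) - 1) = 0 := by
      interval_cases Fintype.card 𝒴 <;> norm_num
    rw [hlog, div_zero]
    exact prob_nonneg hp.1 _
  · rw [ge_iff_le, entropy_decide hp]
    refine div_le_of_le_mul₀ (log_nonneg one_le_card_sub_one) (prob_nonneg hp.1 _) ?_
    linarith [condEntropy_le_binEntropy_add_mul_log hp Y Z g]

/-- Fano's inequality: with estimator g (Z w) of Y w and error indicator E,
P(E = 1) >= (H(Y|Z) - H(E)) / log(card - 1). -/
theorem fano_inequality {Ω γ 𝒴 : Type*} [Fintype Ω] [Fintype γ] [Fintype 𝒴]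
    (p : Ω → ℝ) (hp : IsPMF p) (Y : Ω → 𝒴) (Z : Ω → γ) (g : γ → 𝒴)
    (hcard : 3 ≤ Fintype.card 𝒴) :
    prob p (fun ω => g (Z ω) ≠ Y ω)
      ≥ (condEntropy p Y Z - entropy p (fun ω => decide (g (Z ω) ≠ Y ω)))
          / Real.log ((Fintype.card 𝒴 : ℝ) - 1) :=
  fano_inequality_general p hp Y Z g
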